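/- arXiv:2403.19122 — 2 statements merged into one kernel-verified Lean document; each statement's English description precedes it below -/
import Mathlib

section
/- Safety guarantee for second-order DHOCBFs: define ψ₀(x) = h(x) and ψ₁ via the condition ψ₀(x_{t+1}) - ψ₀(x_t) + γ₁·ψ₀(x_t) ≥ 0. If ψ₀(x_0) ≥ 0, ψ₁-nonnegativity at step 0 (i.e., ψ₀(x_1) - ψ₀(x_0) + γ₁ψ₀(x_0) ≥ 0), and the second-order condition [ψ₀(x_{t+2}) - ψ₀(x_{t+1}) + γ₁ψ₀(x_{t+1})] - [ψ₀(x_{t+1}) - ψ₀(x_t) + γ₁ψ₀(x_t)] + γ₂[ψ₀(x_{t+1}) - ψ₀(x_t) + γ₁ψ₀(x_t)] ≥ 0 holds for all t, with 0 < γ₁, γ₂ ≤ 1, then h(x_t) ≥ 0 for all t ∈ ℕ. -/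
theorem dhocbf_second_order_safety {n : ℕ} (h : (Fin n → ℝ) → ℝ)
    (x : ℕ → (Fin n → ℝ)) (γ₁ γ₂ : ℝ)
    (hγ₁ : 0 < γ₁) (hγ₁' : γ₁ ≤ 1) (hγ₂ : 0 < γ₂) (hγ₂' : γ₂ ≤ 1)
    (ψ₀ : ℕ → ℝ) (hψ₀ : ∀ t, ψ₀ t = h (x t))
    (ψ₁ : ℕ → ℝ) (hψ₁ : ∀ t, ψ₁ t = ψ₀ (t + 1) - ψ₀ t + γ₁ * ψ₀ t)
    (h0 : ψ₀ 0 ≥ 0) (h1 : ψ₁ 0 ≥ 0)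
    (h2 : ∀ t : ℕ, ψ₁ (t + 1) - ψ₁ t + γ₂ * ψ₁ t ≥ 0) :
    ∀ t : ℕ, h (x t) ≥ 0 := by
  have hp1 : ∀ t, ψ₁ t ≥ 0 := by
    intro t
    induction t with
    | zero => exact h1
    | succ k ih =>
      have := h2 k
      nlinarith
  have hp0 : ∀ t, ψ₀ t ≥ 0 := by
    intro t
    induction t with
    | zero => exact h0
    | succ k ih =>
      have := hp1 k
      rw [hψ₁ k] at this
      nlinarith
  intro t
  rw [← hψ₀]
  exact hp0 t
end

section
/- Forward invariance of intersection: given functions ψ₀, …, ψ_{m-1} : ℝⁿ → ℝ defined recursively by ψ_i(x_t) = ψ_{i-1}(x_{t+1}) - ψ_{i-1}(x_t) + γ_i·ψ_{i-1}(x_t) along a trajectory (x_t), with 0 < γ_i ≤ 1 for each i: if ψ_i(x_0) ≥ 0 for all i ∈ {0,…,m-1} and ψ_m(x_t) ≥ 0 for all t, then ψ_i(x_t) ≥ 0 for all i ∈ {0,…,m-1} and all t ∈ ℕ. -/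
theorem dhocbf_forward_invariance (m : ℕ) (γ : ℕ → ℝ)
    (hγ : ∀ i, 1 ≤ i → i ≤ m → 0 < γ i ∧ γ i ≤ 1)
    (ψ : ℕ → ℕ → ℝ)
    (hrec : ∀ i, i < m → ∀ t : ℕ,
      ψ (i + 1) t = ψ i (t + 1) - ψ i t + γ (i + 1) * ψ i t)
    (hinit : ∀ i, i < m → ψ i 0 ≥ 0)
    (htop : ∀ t : ℕ, ψ m t ≥ 0) :
    ∀ i, i < m → ∀ t : ℕ, ψ i t ≥ 0 := by
  have key : ∀ d i, i + d = m → ∀ t, ψ i t ≥ 0 := by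
    intro d
    induction d with
    | zero => intro i hi t; simpa [hi.symm] using htop t
    | succ d ih =>
      intro i hi
      have him : i < m := by omega
      have hnext : ∀ t, ψ (i + 1) t ≥ 0 := ih (i + 1) (by omega)
      intro t
      induction t with
      | zero => exact hinit i him
      | succ t iht =>
        have h := hrec i him t
        have hg := hγ (i + 1) (by omega) (by omega)
        have : ψ i (t + 1) = ψ (i + 1) t + (1 - γ (i + 1)) * ψ i t := by
          rw [h]; ring
        rw [this]
        have : (1 - γ (i + 1)) * ψ i t ≥ 0 :=
          mul_nonneg (by linarith [hg.2]) iht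
        linarith [hnext t]
  intro i hi t
  exact key (m - i) i (by omega) t
end
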